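/- Let S₁(x) = x/3 and S₂(x) = (x+2)/3 on X = [0,1], and let p₁, p₂ : X → [0,1] be Borel measurable with p₁ + p₂ ≡ 1 and min(p₁(x), p₂(x)) ≥ p for a fixed p ∈ (0,1/2), so max ≤ 1−p. If μ is any probability measure invariant under this iterated function system, then μ([k·3⁻ⁿ, (k+1)·3⁻ⁿ)) ≤ (1−p)ⁿ for every n ∈ ℕ and 0 ≤ k < 3ⁿ; in particular μ has no atoms. -/

import Mathlib

open MeasureTheory Set
open scoped ENNReal NNReal

/-!
Pulling a triadic interval of level `n + 1` back along `x ↦ x / 3` and `x ↦ (x + 2) / 3` gives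
two triadic intervals of level `n`, `k` and `k - 2·3ⁿ`, and at most one of them meets the
support `[0, 1]`. Invariance with weights at most `1 - p` then bounds the measure of the
level-`(n + 1)` interval by `1 - p` times that of a level-`n` one, so induction gives `(1 - p)ⁿ`.
Every point lies in a triadic interval of each level, hence carries no mass.
-/

-- Indexed by `ℤ` so that the shifted index `k - 2·3ⁿ` is not truncated.
def triadicInterval (n : ℕ) (k : ℤ) : Set ℝ := Ico (k / 3 ^ n) ((k + 1) / 3 ^ n)

lemma measurableSet_triadicInterval (n : ℕ) (k : ℤ) : MeasurableSet (triadicInterval n k) :=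
  measurableSet_Ico

lemma mem_triadicInterval_floor (n : ℕ) (x : ℝ) : x ∈ triadicInterval n ⌊x * 3 ^ n⌋ := by
  have h3 : (0 : ℝ) < 3 ^ n := by positivity
  rw [triadicInterval, mem_Ico, div_le_iff₀ h3, lt_div_iff₀ h3]
  exact ⟨Int.floor_le _, Int.lt_floor_add_one _⟩

lemma preimage_div_three_triadicInterval (n : ℕ) (k : ℤ) :
    (· / 3) ⁻¹' triadicInterval (n + 1) k = triadicInterval n k := by
  ext x
  simp only [triadicInterval, mem_preimage, mem_Ico, pow_succ, div_mul_eq_div_div]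
  constructor <;> rintro ⟨h₁, h₂⟩ <;> constructor <;> linarith

lemma preimage_add_two_div_three_triadicInterval (n : ℕ) (k : ℤ) :
    (fun x => (x + 2) / 3) ⁻¹' triadicInterval (n + 1) k = triadicInterval n (k - 2 * 3 ^ n) := by
  have h3 : (0 : ℝ) < 3 ^ n := by positivity
  ext x
  have three_pos : (0 : ℝ) < 3 := by norm_num
  simp only [triadicInterval, mem_preimage, mem_Ico, pow_succ, ← div_div,
    div_le_div_iff_of_pos_right three_pos, div_lt_div_iff_of_pos_right three_pos]
  push_cast
  rw [sub_div, sub_add_eq_add_sub, sub_div, mul_div_cancel_right₀ _ h3.ne']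
  constructor <;> rintro ⟨h₁, h₂⟩ <;> constructor <;> linarith

lemma triadicInterval_disjoint_Icc_of_neg {n : ℕ} {k : ℤ} (hk : k < 0) :
    Disjoint (triadicInterval n k) (Icc 0 1) := by
  have h3 : (0 : ℝ) < 3 ^ n := by positivity
  have hk' : (k : ℝ) + 1 ≤ 0 := by exact_mod_cast hk
  refine disjoint_left.2 fun x hx hx' => ?_
  have := div_nonpos_of_nonpos_of_nonneg hk' h3.le
  linarith [hx.2, hx'.1]

lemma triadicInterval_disjoint_Icc_of_pow_lt {n : ℕ} {k : ℤ} (hk : 3 ^ n < k) :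
    Disjoint (triadicInterval n k) (Icc 0 1) := by
  have h3 : (0 : ℝ) < 3 ^ n := by positivity
  have hk' : (3 : ℝ) ^ n < k := by exact_mod_cast hk
  refine disjoint_left.2 fun x hx hx' => ?_
  have : 1 < (k : ℝ) / 3 ^ n := (one_lt_div h3).2 hk'
  linarith [hx.1, hx'.2]

lemma lintegral_weighted_indicator_comp_le {α β : Type*} [MeasurableSpace α] [MeasurableSpace β]
    (μ : Measure α) {w₁ w₂ : α → ℝ≥0∞} {q : ℝ≥0∞} (hw₁ : ∀ x, w₁ x ≤ q) (hw₂ : ∀ x, w₂ x ≤ q)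
    {f g : α → β} (hf : Measurable f) (hg : Measurable g) {B : Set β} (hB : MeasurableSet B) :
    ∫⁻ x, (w₁ x * B.indicator (fun _ => 1) (f x) + w₂ x * B.indicator (fun _ => 1) (g x)) ∂μ
      ≤ q * μ (f ⁻¹' B) + q * μ (g ⁻¹' B) := by
  calc ∫⁻ x, (w₁ x * B.indicator (fun _ => 1) (f x) + w₂ x * B.indicator (fun _ => 1) (g x)) ∂μ
      ≤ ∫⁻ x, ((f ⁻¹' B).indicator (fun _ => q) x + (g ⁻¹' B).indicator (fun _ => q) x) ∂μ := by
        refine lintegral_mono fun x => ?_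
        gcongr
        · by_cases h : f x ∈ B <;> simp [h, hw₁]
        · by_cases h : g x ∈ B <;> simp [h, hw₂]
    _ = q * μ (f ⁻¹' B) + q * μ (g ⁻¹' B) := by
        rw [lintegral_add_left (measurable_const.indicator (hf hB)),
          lintegral_indicator_const (hf hB), lintegral_indicator_const (hg hB)]

section InvariantMeasure

variable {μ : Measure ℝ} [IsProbabilityMeasure μ] {w₁ w₂ : ℝ → ℝ≥0∞} {q : ℝ≥0∞}

theorem measure_triadicInterval_le_pow (hsupp : μ (Icc 0 1)ᶜ = 0)
    (hw₁ : ∀ x, w₁ x ≤ q) (hw₂ : ∀ x, w₂ x ≤ q)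
    (hinv : ∀ B : Set ℝ, MeasurableSet B →
      μ B = ∫⁻ x, (w₁ x * B.indicator (fun _ => 1) (x / 3)
        + w₂ x * B.indicator (fun _ => 1) ((x + 2) / 3)) ∂μ)
    (n : ℕ) (k : ℤ) : μ (triadicInterval n k) ≤ q ^ n := by
  induction n generalizing k with
  | zero => simpa using prob_le_one
  | succ n ih =>
    have hnull {s : Set ℝ} (hs : Disjoint s (Icc 0 1)) : μ s = 0 :=
      measure_mono_null hs.subset_compl_right hsupp
    have hstep : μ (triadicInterval (n + 1) k)
        ≤ q * μ (triadicInterval n k) + q * μ (triadicInterval n (k - 2 * 3 ^ n)) := by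
      have := lintegral_weighted_indicator_comp_le μ hw₁ hw₂ (f := (· / 3))
        (g := fun x => (x + 2) / 3) (by fun_prop) (by fun_prop)
        (measurableSet_triadicInterval (n + 1) k)
      rwa [preimage_div_three_triadicInterval, preimage_add_two_div_three_triadicInterval,
        ← hinv _ (measurableSet_triadicInterval _ _)] at this
    have h3 : (0 : ℤ) < 3 ^ n := by positivity
    rcases lt_or_ge k (2 * 3 ^ n) with hk | hk
    · rw [hnull (triadicInterval_disjoint_Icc_of_neg (n := n) (k := k - 2 * 3 ^ n) (by omega)),
        mul_zero, add_zero] at hstep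
      exact hstep.trans (by rw [pow_succ']; gcongr; exact ih k)
    · rw [hnull (triadicInterval_disjoint_Icc_of_pow_lt (n := n) (k := k) (by omega)),
        mul_zero, zero_add] at hstep
      exact hstep.trans (by rw [pow_succ']; gcongr; exact ih _)

theorem invariant_measure_singleton_eq_zero (hsupp : μ (Icc 0 1)ᶜ = 0)
    (hw₁ : ∀ x, w₁ x ≤ q) (hw₂ : ∀ x, w₂ x ≤ q) (hq : q < 1)
    (hinv : ∀ B : Set ℝ, MeasurableSet B →
      μ B = ∫⁻ x, (w₁ x * B.indicator (fun _ => 1) (x / 3)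
        + w₂ x * B.indicator (fun _ => 1) ((x + 2) / 3)) ∂μ)
    (x : ℝ) : μ {x} = 0 := by
  refine le_antisymm (ge_of_tendsto' (ENNReal.tendsto_pow_atTop_nhds_zero_of_lt_one hq)
    fun n => ?_) zero_le
  exact (measure_mono (singleton_subset_iff.2 (mem_triadicInterval_floor n x))).trans
    (measure_triadicInterval_le_pow hsupp hw₁ hw₂ hinv n _)

end InvariantMeasure

theorem stmt11 (p : ℝ) (hp0 : 0 < p)
    (p₁ p₂ : ℝ → ℝ)
    (hsum : ∀ x, p₁ x + p₂ x = 1)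
    (hlow : ∀ x, p ≤ min (p₁ x) (p₂ x))
    (μ : Measure ℝ) [IsProbabilityMeasure μ] (hsupp : μ (Icc (0 : ℝ) 1) = 1)
    (hinv : ∀ B : Set ℝ, MeasurableSet B →
      μ B = ∫⁻ x, (ENNReal.ofReal (p₁ x) * B.indicator (fun _ => (1 : ℝ≥0∞)) (x / 3)
        + ENNReal.ofReal (p₂ x) * B.indicator (fun _ => (1 : ℝ≥0∞)) ((x + 2) / 3)) ∂μ) :
    (∀ n k : ℕ, k < 3 ^ n →
        μ (Ico ((k : ℝ) / 3 ^ n) (((k : ℝ) + 1) / 3 ^ n)) ≤ ENNReal.ofReal ((1 - p) ^ n)) ∧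
      ∀ x : ℝ, μ {x} = 0 := by
  have hcompl : μ (Icc 0 1)ᶜ = 0 := (prob_compl_eq_zero_iff measurableSet_Icc).2 hsupp
  have hlow₁ x : p ≤ p₁ x := (hlow x).trans (min_le_left _ _)
  have hlow₂ x : p ≤ p₂ x := (hlow x).trans (min_le_right _ _)
  have hp : p ≤ 1 - p := by linarith [hsum 0, hlow₁ 0, hlow₂ 0]
  have hw₁ x : ENNReal.ofReal (p₁ x) ≤ ENNReal.ofReal (1 - p) :=
    ENNReal.ofReal_le_ofReal (by linarith [hsum x, hlow₂ x])
  have hw₂ x : ENNReal.ofReal (p₂ x) ≤ ENNReal.ofReal (1 - p) :=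
    ENNReal.ofReal_le_ofReal (by linarith [hsum x, hlow₁ x])
  refine ⟨fun n k _ => ?_, invariant_measure_singleton_eq_zero hcompl hw₁ hw₂
    (ENNReal.ofReal_lt_one.2 (by linarith)) hinv⟩
  rw [ENNReal.ofReal_pow (by linarith)]
  simpa [triadicInterval] using measure_triadicInterval_le_pow hcompl hw₁ hw₂ hinv n k
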